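/- arXiv:2511.10425 — 2 statements merged into one kernel-verified Lean document; each statement's English description precedes it below -/
import Mathlib

section
/- Let S ⊆ ℝⁿ be a nonempty convex set, L > 0, ν ∈ (0,1], and h a convex differentiable function whose gradient is (ν,L)-Hölder on S. If x, y ∈ S are such that both y − d_{x,y}/L^{1/ν} ∈ S and x + d_{x,y}/L^{1/ν} ∈ S, where d_{x,y} := ‖∇h(y) − ∇h(x)‖^{(1−ν)/ν}(∇h(y) − ∇h(x)), then ⟨∇h(y) − ∇h(x), y − x⟩ ≥ (2ν/((1+ν)L^{1/ν}))‖∇h(y) − ∇h(x)‖^{(1+ν)/ν}. -/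
open Set Metric
open scoped InnerProductSpace

/-!
Put `w = holderStep L ν (∇h y - ∇h x)`, the paper's `d_{x,y} / L^{1/ν}`. Bounding `h (y - w)` from
below by the supporting hyperplane at `x` and from above by the Hölder descent inequality at `y`
gives `h y ≥ h x + ⟪∇h x, y - x⟫ + ν/((1+ν) L^{1/ν}) ‖∇h y - ∇h x‖^{(1+ν)/ν}`: the step `w`
maximises the gain `⟪∇h y - ∇h x, w⟫ - L/(1+ν) ‖w‖^{1+ν}`, and at the maximiser
`L ‖w‖^{1+ν} = ⟪∇h y - ∇h x, w⟫`. Adding this bound for `(x, y)` and for `(y, x)` gives the claim.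
-/

theorem Real.le_add_deriv_add_of_deriv_sub_le_rpow {f f' : ℝ → ℝ} {K ν : ℝ} (hν : 0 ≤ ν)
    (hf : ∀ t ∈ Icc (0 : ℝ) 1, HasDerivAt f (f' t) t)
    (hbound : ∀ t ∈ Ioo (0 : ℝ) 1, f' t - f' 0 ≤ K * t ^ ν) :
    f 1 ≤ f 0 + f' 0 + K / (1 + ν) := by
  set φ : ℝ → ℝ := fun t ↦ f t - t * f' 0 - K / (1 + ν) * t ^ (1 + ν)
  have hφ : ∀ t ∈ Icc (0 : ℝ) 1, HasDerivAt φ (f' t - f' 0 - K * t ^ ν) t := by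
    intro t ht
    have hpow : HasDerivAt (fun s : ℝ ↦ s ^ (1 + ν)) ((1 + ν) * t ^ ν) t := by
      simpa using Real.hasDerivAt_rpow_const (x := t) (p := 1 + ν) (Or.inr (by linarith))
    exact (((hf t ht).sub ((hasDerivAt_id' t).mul_const (f' 0))).sub
      (hpow.const_mul (K / (1 + ν)))).congr_deriv (by field_simp)
  have hanti : AntitoneOn φ (Icc 0 1) :=
    antitoneOn_of_hasDerivWithinAt_nonpos (convex_Icc 0 1)
      (fun t ht ↦ (hφ t ht).continuousAt.continuousWithinAt)
      (fun t ht ↦ (hφ t (interior_subset ht)).hasDerivWithinAt)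
      (fun t ht ↦ by rw [interior_Icc] at ht; linarith [hbound t ht])
  have := hanti (left_mem_Icc.mpr zero_le_one) (right_mem_Icc.mpr zero_le_one) zero_le_one
  simp only [φ, Real.one_rpow, Real.zero_rpow (by linarith : (1 : ℝ) + ν ≠ 0)] at this
  linarith

section Gradient

variable {E : Type*} [NormedAddCommGroup E] [InnerProductSpace ℝ E] [CompleteSpace E]

open AffineMap

theorem HasGradientAt.hasDerivAt_comp_lineMap {h : E → ℝ} {g' a b : E} {t : ℝ}
    (hg : HasGradientAt h g' (lineMap a b t)) :
    HasDerivAt (h ∘ lineMap a b) ⟪g', b - a⟫_ℝ t := by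
  simpa [InnerProductSpace.toDual_apply_apply] using
    (hasGradientAt_iff_hasFDerivAt.mp hg).comp_hasDerivAt t hasDerivAt_lineMap

theorem ConvexOn.add_inner_le_of_hasGradientAt {S : Set E} {h : E → ℝ} (hconv : ConvexOn ℝ S h)
    {a b g' : E} (ha : a ∈ S) (hb : b ∈ S) (hg : HasGradientAt h g' a) :
    h a + ⟪g', b - a⟫_ℝ ≤ h b := by
  have hline : ConvexOn ℝ (lineMap a b ⁻¹' S) (h ∘ lineMap (k := ℝ) a b) :=
    hconv.comp_affineMap _
  have hderiv : HasDerivAt (h ∘ lineMap a b) ⟪g', b - a⟫_ℝ (0 : ℝ) :=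
    HasGradientAt.hasDerivAt_comp_lineMap (by simpa using hg)
  have := hline.le_slope_of_hasDerivAt (by simpa using ha) (by simpa using hb) one_pos hderiv
  simp only [slope_def_field, Function.comp_apply, lineMap_apply_one, lineMap_apply_zero] at this
  linarith

theorem Convex.le_add_inner_add_rpow_of_holder_gradient {S : Set E} (hS : Convex ℝ S)
    {h : E → ℝ} {g : E → E} {L ν : ℝ} (hν : 0 ≤ ν) (hgrad : ∀ x ∈ S, HasGradientAt h (g x) x)
    (hhold : ∀ x ∈ S, ∀ y ∈ S, ‖g x - g y‖ ≤ L * ‖x - y‖ ^ ν) {a b : E} (ha : a ∈ S)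
    (hb : b ∈ S) :
    h b ≤ h a + ⟪g a, b - a⟫_ℝ + L / (1 + ν) * ‖b - a‖ ^ (1 + ν) := by
  have hseg : ∀ t ∈ Icc (0 : ℝ) 1, lineMap a b t ∈ S := fun t ht ↦ hS.lineMap_mem ha hb ht
  have hbound : ∀ t ∈ Ioo (0 : ℝ) 1,
      ⟪g (lineMap a b t), b - a⟫_ℝ - ⟪g (lineMap a b (0 : ℝ)), b - a⟫_ℝ
        ≤ L * ‖b - a‖ ^ (1 + ν) * t ^ ν := by
    intro t ht
    have hdist : ‖lineMap a b t - a‖ = t * ‖b - a‖ := by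
      rw [lineMap_apply_module', add_sub_cancel_right, norm_smul, Real.norm_of_nonneg ht.1.le]
    calc ⟪g (lineMap a b t), b - a⟫_ℝ - ⟪g (lineMap a b (0 : ℝ)), b - a⟫_ℝ
        = ⟪g (lineMap a b t) - g a, b - a⟫_ℝ := by rw [inner_sub_left, lineMap_apply_zero]
      _ ≤ ‖g (lineMap a b t) - g a‖ * ‖b - a‖ := real_inner_le_norm _ _
      _ ≤ L * ‖lineMap a b t - a‖ ^ ν * ‖b - a‖ := by
        gcongr
        exact hhold _ (hseg t (Ioo_subset_Icc_self ht)) _ ha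
      _ = L * ‖b - a‖ ^ (1 + ν) * t ^ ν := by
        rw [hdist, Real.mul_rpow ht.1.le (norm_nonneg _),
          Real.rpow_one_add' (norm_nonneg _) (by linarith)]
        ring
  have := Real.le_add_deriv_add_of_deriv_sub_le_rpow hν
    (fun t ht ↦ (hgrad _ (hseg t ht)).hasDerivAt_comp_lineMap) hbound
  simp only [Function.comp_apply, lineMap_apply_one, lineMap_apply_zero] at this
  linarith [mul_div_right_comm L (‖b - a‖ ^ (1 + ν)) (1 + ν)]

end Gradient

section HolderStep

variable {E : Type*} [NormedAddCommGroup E] [InnerProductSpace ℝ E]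

noncomputable def holderStep (L ν : ℝ) (u : E) : E := (L ^ (1 / ν))⁻¹ • (‖u‖ ^ ((1 - ν) / ν) • u)

theorem holderStep_neg (L ν : ℝ) (u : E) : holderStep L ν (-u) = -holderStep L ν u := by
  simp only [holderStep, norm_neg, smul_neg]

theorem inner_holderStep {ν : ℝ} (hν : 0 < ν) (L : ℝ) (u : E) :
    ⟪u, holderStep L ν u⟫_ℝ = (L ^ (1 / ν))⁻¹ * ‖u‖ ^ ((1 + ν) / ν) := by
  have hexp : (1 + ν) / ν = (1 - ν) / ν + 2 := by field_simp; ring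
  rw [holderStep, real_inner_smul_right, real_inner_smul_right, real_inner_self_eq_norm_sq,
    hexp, Real.rpow_add' (norm_nonneg u) (by rw [← hexp]; positivity), Real.rpow_two]

theorem mul_norm_holderStep_rpow {L ν : ℝ} (hL : 0 < L) (hν : 0 < ν) (u : E) :
    L * ‖holderStep L ν u‖ ^ (1 + ν) = ⟪u, holderStep L ν u⟫_ℝ := by
  set M := L ^ (1 / ν)
  have hM : 0 < M := Real.rpow_pos_of_pos hL _
  have hMν : M ^ ν = L := by
    rw [← Real.rpow_mul hL.le, one_div_mul_cancel hν.ne', Real.rpow_one]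
  have hnorm : ‖holderStep L ν u‖ = M⁻¹ * ‖u‖ ^ (1 / ν) := by
    have hexp : 1 / ν = (1 - ν) / ν + 1 := by field_simp; ring
    rw [holderStep, norm_smul, norm_smul, Real.norm_of_nonneg (inv_nonneg.mpr hM.le),
      Real.norm_of_nonneg (Real.rpow_nonneg (norm_nonneg u) _), hexp,
      Real.rpow_add_one' (norm_nonneg u) (by rw [← hexp]; positivity)]
  rw [inner_holderStep hν, hnorm, Real.mul_rpow (inv_nonneg.mpr hM.le) (by positivity),
    Real.inv_rpow hM.le, Real.rpow_one_add' hM.le (by linarith), hMν, ← Real.rpow_mul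
    (norm_nonneg u), one_div_mul_eq_div]
  field_simp
  exact mul_comm _ _

end HolderStep

theorem ConvexOn.add_inner_add_rpow_le_of_holder_gradient {E : Type*} [NormedAddCommGroup E]
    [InnerProductSpace ℝ E] [CompleteSpace E] {S : Set E} {h : E → ℝ} {g : E → E} {L ν : ℝ}
    (hconv : ConvexOn ℝ S h) (hL : 0 < L) (hν : 0 < ν)
    (hgrad : ∀ x ∈ S, HasGradientAt h (g x) x)
    (hhold : ∀ x ∈ S, ∀ y ∈ S, ‖g x - g y‖ ≤ L * ‖x - y‖ ^ ν) {x y : E} (hx : x ∈ S)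
    (hy : y ∈ S) (hz : y - holderStep L ν (g y - g x) ∈ S) :
    h x + ⟪g x, y - x⟫_ℝ + ν / ((1 + ν) * L ^ (1 / ν)) * ‖g y - g x‖ ^ ((1 + ν) / ν) ≤ h y := by
  set w := holderStep L ν (g y - g x)
  have hsupport := hconv.add_inner_le_of_hasGradientAt hx hz (hgrad x hx)
  have hdescent := hconv.1.le_add_inner_add_rpow_of_holder_gradient hν.le hgrad hhold hy hz
  rw [sub_sub_cancel_left, norm_neg, inner_neg_right] at hdescent
  rw [sub_right_comm, inner_sub_right] at hsupport
  have hgain : ⟪g y, w⟫_ℝ - ⟪g x, w⟫_ℝ - L / (1 + ν) * ‖w‖ ^ (1 + ν) =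
      ν / ((1 + ν) * L ^ (1 / ν)) * ‖g y - g x‖ ^ ((1 + ν) / ν) := by
    rw [← inner_sub_left, div_mul_eq_mul_div, mul_norm_holderStep_rpow hL hν,
      inner_holderStep hν]
    field_simp
    ring
  linarith

theorem stmt3_general {n : ℕ} (S : Set (EuclideanSpace ℝ (Fin n)))
    (L ν : ℝ) (hL : 0 < L) (hν : ν ∈ Set.Ioc (0 : ℝ) 1)
    (h : EuclideanSpace ℝ (Fin n) → ℝ)
    (g : EuclideanSpace ℝ (Fin n) → EuclideanSpace ℝ (Fin n))
    (hgrad : ∀ x ∈ S, HasGradientAt h (g x) x)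
    (hconv : ConvexOn ℝ S h)
    (hhold : ∀ x ∈ S, ∀ y ∈ S, ‖g x - g y‖ ≤ L * ‖x - y‖ ^ ν)
    (x y : EuclideanSpace ℝ (Fin n)) (hx : x ∈ S) (hy : y ∈ S)
    (hmem1 : y - (L ^ (1 / ν))⁻¹ • (‖g y - g x‖ ^ ((1 - ν) / ν) • (g y - g x)) ∈ S)
    (hmem2 : x + (L ^ (1 / ν))⁻¹ • (‖g y - g x‖ ^ ((1 - ν) / ν) • (g y - g x)) ∈ S) :
    ⟪g y - g x, y - x⟫_ℝ ≥
      2 * ν / ((1 + ν) * L ^ (1 / ν)) * ‖g y - g x‖ ^ ((1 + ν) / ν) := by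
  have hxy := hconv.add_inner_add_rpow_le_of_holder_gradient hL hν.1 hgrad hhold hx hy hmem1
  have hyx := hconv.add_inner_add_rpow_le_of_holder_gradient hL hν.1 hgrad hhold hy hx
    (by rwa [← neg_sub (g y) (g x), holderStep_neg, sub_neg_eq_add])
  rw [norm_sub_rev, ← neg_sub y x, inner_neg_right] at hyx
  rw [inner_sub_left, mul_div_assoc, mul_assoc]
  linarith

theorem stmt3 {n : ℕ} (S : Set (EuclideanSpace ℝ (Fin n))) (hSne : S.Nonempty)
    (hSconv : Convex ℝ S) (L ν : ℝ) (hL : 0 < L) (hν : ν ∈ Set.Ioc (0 : ℝ) 1)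
    (h : EuclideanSpace ℝ (Fin n) → ℝ)
    (g : EuclideanSpace ℝ (Fin n) → EuclideanSpace ℝ (Fin n))
    (hgrad : ∀ x ∈ S, HasGradientAt h (g x) x)
    (hconv : ConvexOn ℝ S h)
    (hhold : ∀ x ∈ S, ∀ y ∈ S, ‖g x - g y‖ ≤ L * ‖x - y‖ ^ ν)
    (x y : EuclideanSpace ℝ (Fin n)) (hx : x ∈ S) (hy : y ∈ S)
    (hmem1 : y - (L ^ (1 / ν))⁻¹ • (‖g y - g x‖ ^ ((1 - ν) / ν) • (g y - g x)) ∈ S)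
    (hmem2 : x + (L ^ (1 / ν))⁻¹ • (‖g y - g x‖ ^ ((1 - ν) / ν) • (g y - g x)) ∈ S) :
    ⟪g y - g x, y - x⟫_ℝ ≥
      2 * ν / ((1 + ν) * L ^ (1 / ν)) * ‖g y - g x‖ ^ ((1 + ν) / ν) :=
  stmt3_general S L ν hL hν h g hgrad hconv hhold x y hx hy hmem1 hmem2
end

section
/- Let f : ℝⁿ → ℝ be differentiable, μ-strongly convex and with L-Lipschitz gradient on a convex set Ω containing the iterates and the unique minimizer x*, with μ < L. If x^{k+1} = x^k − α_k∇f(x^k) with ᾱ ≤ α_k ≤ 1/L for some 0 < ᾱ < 1/L, then ‖x^{k+1} − x*‖² ≤ (1 − 2ᾱμL/(μ + L))‖x^k − x*‖². -/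
open Set Metric
open scoped InnerProductSpace

/-!
Write `x⁺ = x - α • g x`. Only the values of `f` at `x`, at the minimiser `x₀` and at `x⁺` are
compared: strong convexity from `x` towards `x₀` bounds `⟪g x, x - x₀⟫` from below, strong
convexity at `x₀` (where `g` vanishes) bounds `f x - f x₀` and `f x⁺ - f x₀` from below, and the
descent lemma on the segment `[x, x⁺] ⊆ Ω` bounds `f x⁺` from above. Together with the expansion of
`‖x⁺ - x₀‖²` these give `(2 - Lα + μα) ‖x⁺ - x₀‖² ≤ (2 - Lα - 3μα + 2μLα²) ‖x - x₀‖²`, and for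
`ᾱ ≤ α ≤ 1/L` the right-hand coefficient is at most `(1 - 2ᾱμL/(μ+L)) (2 - Lα + μα)`. The usual
route through co-coercivity of `g` is not available, since its proof evaluates `f` off `Ω`.
-/

section

variable {E : Type*} [NormedAddCommGroup E] [InnerProductSpace ℝ E]
  {Ω : Set E} {f : E → ℝ} {g : E → E} {L μ : ℝ}

theorem HasGradientAt.hasDerivAt_comp_add_smul [CompleteSpace E] {g' x v : E} {t : ℝ}
    (hf : HasGradientAt f g' (x + t • v)) :
    HasDerivAt (fun s : ℝ => f (x + s • v)) ⟪g', v⟫_ℝ t := by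
  have hline : HasDerivAt (fun s : ℝ => x + s • v) v t := by
    simpa using ((hasDerivAt_id t).smul_const v).const_add x
  simpa [InnerProductSpace.toDual_apply_apply, Function.comp_def] using
    hf.hasFDerivAt.comp_hasDerivAt t hline

theorem Convex.le_add_inner_add_of_lipschitz_gradient [CompleteSpace E] (hΩ : Convex ℝ Ω)
    (hgrad : ∀ x ∈ Ω, HasGradientAt f (g x) x)
    (hlip : ∀ x ∈ Ω, ∀ y ∈ Ω, ‖g x - g y‖ ≤ L * ‖x - y‖)
    {x y : E} (hx : x ∈ Ω) (hy : y ∈ Ω) :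
    f y ≤ f x + ⟪g x, y - x⟫_ℝ + L / 2 * ‖y - x‖ ^ 2 := by
  set v := y - x
  have hseg : ∀ t ∈ Icc (0 : ℝ) 1, x + t • v ∈ Ω := fun t ht => by
    simpa [v, AffineMap.lineMap_apply_module', add_comm] using
      hΩ.lineMap_mem hx hy ht
  set ψ : ℝ → ℝ := fun t => f (x + t • v) - t * ⟪g x, v⟫_ℝ - L / 2 * t ^ 2 * ‖v‖ ^ 2
  have hderiv : ∀ t ∈ Icc (0 : ℝ) 1,
      HasDerivAt ψ (⟪g (x + t • v) - g x, v⟫_ℝ - L * t * ‖v‖ ^ 2) t := fun t ht => by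
    have := (((hgrad _ (hseg t ht)).hasDerivAt_comp_add_smul).sub
      ((hasDerivAt_id t).mul_const ⟪g x, v⟫_ℝ)).sub
      (((hasDerivAt_pow 2 t).const_mul (L / 2)).mul_const (‖v‖ ^ 2))
    refine this.congr_deriv ?_
    simp only [inner_sub_left, Nat.cast_ofNat, one_mul]
    ring
  have hderiv_nonpos : ∀ t ∈ Icc (0 : ℝ) 1,
      ⟪g (x + t • v) - g x, v⟫_ℝ - L * t * ‖v‖ ^ 2 ≤ 0 := fun t ht => by
    have hshift : ‖x + t • v - x‖ = t * ‖v‖ := by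
      rw [add_sub_cancel_left, norm_smul, Real.norm_of_nonneg ht.1]
    calc ⟪g (x + t • v) - g x, v⟫_ℝ - L * t * ‖v‖ ^ 2
        ≤ ‖g (x + t • v) - g x‖ * ‖v‖ - L * t * ‖v‖ ^ 2 := by
          gcongr; exact real_inner_le_norm _ _
      _ ≤ L * (t * ‖v‖) * ‖v‖ - L * t * ‖v‖ ^ 2 := by
          gcongr; rw [← hshift]; exact hlip _ (hseg t ht) _ hx
      _ = 0 := by ring
  have hanti : AntitoneOn ψ (Icc 0 1) :=
    antitoneOn_of_hasDerivWithinAt_nonpos (convex_Icc 0 1)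
      (fun t ht => (hderiv t ht).continuousAt.continuousWithinAt)
      (fun t ht => (hderiv t (interior_subset ht)).hasDerivWithinAt)
      (fun t ht => hderiv_nonpos t (interior_subset ht))
  have := hanti (left_mem_Icc.2 zero_le_one) (right_mem_Icc.2 zero_le_one) zero_le_one
  simp only [ψ, v, zero_smul, one_smul, add_zero, add_sub_cancel] at this
  linarith

variable {x x₀ : E} (hstr : ∀ x ∈ Ω, ∀ y ∈ Ω, f y ≥ f x + ⟪g x, y - x⟫_ℝ + μ / 2 * ‖y - x‖ ^ 2)
include hstr

theorem sq_norm_sub_le_of_gradient_eq_zero (hx₀ : x₀ ∈ Ω) (hg₀ : g x₀ = 0) (hx : x ∈ Ω) :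
    μ / 2 * ‖x - x₀‖ ^ 2 ≤ f x - f x₀ := by
  have := hstr x₀ hx₀ x hx
  rw [hg₀, inner_zero_left] at this
  linarith

theorem mul_sq_norm_gradient_step_sub_le [CompleteSpace E] (hΩ : Convex ℝ Ω)
    (hgrad : ∀ x ∈ Ω, HasGradientAt f (g x) x)
    (hlip : ∀ x ∈ Ω, ∀ y ∈ Ω, ‖g x - g y‖ ≤ L * ‖x - y‖)
    (hx₀ : x₀ ∈ Ω) (hg₀ : g x₀ = 0) (hx : x ∈ Ω) {α : ℝ} (hstep : x - α • g x ∈ Ω)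
    (hα : 0 ≤ α) (hLα : L * α ≤ 1) :
    (2 - L * α + μ * α) * ‖x - α • g x - x₀‖ ^ 2 ≤
      (2 - L * α - 3 * μ * α + 2 * μ * L * α ^ 2) * ‖x - x₀‖ ^ 2 := by
  have hinner : f x + ⟪g x, x₀ - x⟫_ℝ + μ / 2 * ‖x₀ - x‖ ^ 2 ≤ f x₀ := hstr x hx x₀ hx₀
  rw [← neg_sub x, inner_neg_right, norm_neg] at hinner
  have hgap_step := sq_norm_sub_le_of_gradient_eq_zero hstr hx₀ hg₀ hstep
  have hgap := sq_norm_sub_le_of_gradient_eq_zero hstr hx₀ hg₀ hx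
  have hdescent := hΩ.le_add_inner_add_of_lipschitz_gradient hgrad hlip hx hstep
  rw [sub_sub_cancel_left, inner_neg_right, norm_neg, inner_smul_right, real_inner_self_eq_norm_sq,
    norm_smul, mul_pow, Real.norm_eq_abs, sq_abs] at hdescent
  have hexpand : ‖x - α • g x - x₀‖ ^ 2 =
      ‖x - x₀‖ ^ 2 - 2 * α * ⟪g x, x - x₀⟫_ℝ + α ^ 2 * ‖g x‖ ^ 2 := by
    rw [sub_right_comm, norm_sub_sq_real, real_inner_smul_right, real_inner_comm, norm_smul,
      mul_pow, Real.norm_eq_abs, sq_abs]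
    ring
  have h₁ : 0 ≤ 2 * α * (2 - L * α) := by nlinarith
  have h₂ : 0 ≤ 2 * α * (1 - L * α) := by nlinarith
  -- the weights make the values of `f` and the terms in `‖g x‖ ^ 2` cancel
  linear_combination mul_le_mul_of_nonneg_left hinner h₁ +
    2 * mul_le_mul_of_nonneg_left hgap_step hα + 2 * mul_le_mul_of_nonneg_left hdescent hα +
    mul_le_mul_of_nonneg_left hgap h₂ + (2 - L * α) * hexpand

end

theorem gradient_step_coeff_le {L μ α ᾱ : ℝ} (hμ : 0 < μ) (hL : 0 < L) (hα : 0 ≤ α)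
    (hᾱα : ᾱ ≤ α) (hLα : L * α ≤ 1) :
    2 - L * α - 3 * μ * α + 2 * μ * L * α ^ 2 ≤
      (1 - 2 * ᾱ * μ * L / (μ + L)) * (2 - L * α + μ * α) := by
  have hgap : 0 ≤ α - ᾱ := by linarith
  have hLα' : 0 ≤ 1 - L * α := by linarith
  have hpos : 0 ≤ 2 - L * α + μ * α := by nlinarith
  have hshrink : 2 * ᾱ * μ * L / (μ + L) * (2 - L * α + μ * α) ≤ 2 * μ * α * (2 - L * α) := by
    rw [div_mul_eq_mul_div, div_le_iff₀ (by positivity)]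
    nlinarith [mul_nonneg (mul_nonneg hgap hpos) (mul_pos hμ hL).le,
      mul_nonneg (mul_nonneg (sq_nonneg μ) hα) hLα']
  linarith

theorem stmt13_general {n : ℕ} (Ω : Set (EuclideanSpace ℝ (Fin n))) (hΩconv : Convex ℝ Ω)
    (L μ : ℝ) (hμ : 0 < μ)
    (f : EuclideanSpace ℝ (Fin n) → ℝ)
    (g : EuclideanSpace ℝ (Fin n) → EuclideanSpace ℝ (Fin n))
    (hgrad : ∀ x ∈ Ω, HasGradientAt f (g x) x)
    (hlip : ∀ x ∈ Ω, ∀ y ∈ Ω, ‖g x - g y‖ ≤ L * ‖x - y‖)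
    (hstr : ∀ x ∈ Ω, ∀ y ∈ Ω, f y ≥ f x + ⟪g x, y - x⟫_ℝ + μ / 2 * ‖y - x‖ ^ 2)
    (xstar : EuclideanSpace ℝ (Fin n)) (hxstar : xstar ∈ Ω)
    (hgstar : g xstar = 0)
    (xk xk1 : EuclideanSpace ℝ (Fin n)) (hxk : xk ∈ Ω) (hxk1 : xk1 ∈ Ω)
    (α ᾱ : ℝ) (hᾱ0 : 0 < ᾱ) (hα : ᾱ ≤ α ∧ α ≤ 1 / L)
    (hupd : xk1 = xk - α • g xk) :
    ‖xk1 - xstar‖ ^ 2 ≤ (1 - 2 * ᾱ * μ * L / (μ + L)) * ‖xk - xstar‖ ^ 2 := by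
  obtain ⟨hᾱα, hα1⟩ := hα
  have hα0 : 0 < α := hᾱ0.trans_le hᾱα
  have hL : 0 < L := one_div_pos.mp (hα0.trans_le hα1)
  have hLα : L * α ≤ 1 := by rwa [le_div_iff₀ hL, mul_comm] at hα1
  have hpos : 0 < 2 - L * α + μ * α := by nlinarith
  subst hupd
  refine le_of_mul_le_mul_left ?_ hpos
  calc (2 - L * α + μ * α) * ‖xk - α • g xk - xstar‖ ^ 2
      ≤ (2 - L * α - 3 * μ * α + 2 * μ * L * α ^ 2) * ‖xk - xstar‖ ^ 2 :=
        mul_sq_norm_gradient_step_sub_le hstr hΩconv hgrad hlip hxstar hgstar hxk hxk1 hα0.le hLα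
    _ ≤ (1 - 2 * ᾱ * μ * L / (μ + L)) * (2 - L * α + μ * α) * ‖xk - xstar‖ ^ 2 := by
        gcongr
        exact gradient_step_coeff_le hμ hL hα0.le hᾱα hLα
    _ = (2 - L * α + μ * α) * ((1 - 2 * ᾱ * μ * L / (μ + L)) * ‖xk - xstar‖ ^ 2) := by ring

theorem stmt13 {n : ℕ} (Ω : Set (EuclideanSpace ℝ (Fin n))) (hΩconv : Convex ℝ Ω)
    (L μ : ℝ) (hμ : 0 < μ) (hμL : μ < L)
    (f : EuclideanSpace ℝ (Fin n) → ℝ)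
    (g : EuclideanSpace ℝ (Fin n) → EuclideanSpace ℝ (Fin n))
    (hgrad : ∀ x ∈ Ω, HasGradientAt f (g x) x)
    (hlip : ∀ x ∈ Ω, ∀ y ∈ Ω, ‖g x - g y‖ ≤ L * ‖x - y‖)
    (hstr : ∀ x ∈ Ω, ∀ y ∈ Ω, f y ≥ f x + ⟪g x, y - x⟫_ℝ + μ / 2 * ‖y - x‖ ^ 2)
    (xstar : EuclideanSpace ℝ (Fin n)) (hxstar : xstar ∈ Ω)
    (hmin : ∀ y, f xstar ≤ f y) (hgstar : g xstar = 0)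
    (xk xk1 : EuclideanSpace ℝ (Fin n)) (hxk : xk ∈ Ω) (hxk1 : xk1 ∈ Ω)
    (α ᾱ : ℝ) (hᾱ0 : 0 < ᾱ) (hᾱ1 : ᾱ < 1 / L) (hα : ᾱ ≤ α ∧ α ≤ 1 / L)
    (hupd : xk1 = xk - α • g xk) :
    ‖xk1 - xstar‖ ^ 2 ≤ (1 - 2 * ᾱ * μ * L / (μ + L)) * ‖xk - xstar‖ ^ 2 :=
  stmt13_general Ω hΩconv L μ hμ f g hgrad hlip hstr xstar hxstar hgstar xk xk1 hxk hxk1 α ᾱ hᾱ0 hα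
    hupd
end
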